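/- arXiv:1202.2341 — 4 statements merged into one kernel-verified Lean document; each statement's English description precedes it below -/
import Mathlib

section
/- For all real numbers a, b > 0, the inequality 2(a - b)^2 ≤ (a^2 - b^2) · log(a/b) holds. -/
open Real

/-- Truncate `log ((1 + t) / (1 - t)) = 2 (t + t³/3 + ⋯)`, a series of nonnegative terms for
`t = (a - b) / (a + b) ∈ [0, 1)`, after its first term. -/
lemma two_mul_sub_div_add_le_log_div {a b : ℝ} (hb : 0 < b) (hba : b ≤ a) :
    2 * (a - b) / (a + b) ≤ log (a / b) := by
  have hab : 0 < a + b := by linarith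
  have ht₀ : 0 ≤ (a - b) / (a + b) := div_nonneg (by linarith) hab.le
  have ht₁ : (a - b) / (a + b) < 1 := (div_lt_one hab).2 (by linarith)
  have hseries := sum_range_le_log_div ht₀ ht₁ 1
  have hquot : (1 + (a - b) / (a + b)) / (1 - (a - b) / (a + b)) = a / b := by
    rw [one_add_div hab.ne', one_sub_div hab.ne', div_div_div_cancel_right₀ hab.ne',
      div_eq_div_iff (by linarith) hb.ne']
    ring
  simp only [Finset.sum_range_one, mul_zero, zero_add, pow_one, Nat.cast_zero, div_one,
    hquot] at hseries
  rw [mul_div_assoc]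
  linarith

lemma sq_sub_sq_mul_log_div_comm (a b : ℝ) :
    (b ^ 2 - a ^ 2) * log (b / a) = (a ^ 2 - b ^ 2) * log (a / b) := by
  rw [← inv_div, log_inv]
  ring

theorem two_mul_sq_sub_le_sq_diff_mul_log (a b : ℝ) (ha : 0 < a) (hb : 0 < b) :
    2 * (a - b) ^ 2 ≤ (a ^ 2 - b ^ 2) * Real.log (a / b) := by
  wlog hba : b ≤ a generalizing a b
  · have := this b a hb ha (le_of_not_ge hba)
    rwa [sq_sub_sq_mul_log_div_comm, ← neg_sub, neg_sq] at this
  have hab : 0 < a + b := by linarith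
  calc 2 * (a - b) ^ 2 = (a ^ 2 - b ^ 2) * (2 * (a - b) / (a + b)) := by
        field_simp
        ring
    _ ≤ (a ^ 2 - b ^ 2) * log (a / b) :=
        mul_le_mul_of_nonneg_left (two_mul_sub_div_add_le_log_div hb hba) (by nlinarith)
end

section
/- Let p ∈ (1,2] and let t ∈ (0,1). Then -∑_{k=0}^∞ p^k · log(1 - t²/p^(2k)) = ∑_{k=0}^∞ (p^(2k+1)/(p^(2k+1) - 1)) · t^(2(k+1))/(k+1), and this quantity is at most -(p/(p-1)) · log(1 - t²). -/
/-!
Expand `-log (1 - x / p ^ (2 * k)) = ∑ j, (x / p ^ (2 * k)) ^ (j + 1) / (j + 1)`. In the resulting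
double series of nonnegative terms, summing first over `k` instead gives, for each `j`, a geometric
series of ratio `p ^ -(2 * j + 1)`, whence the factor `p ^ (2 * j + 1) / (p ^ (2 * j + 1) - 1)`.
This factor is decreasing in the exponent, so it is at most `p / (p - 1)`, and the remaining series
`∑ j, x ^ (j + 1) / (j + 1)` is again `-log (1 - x)`.
-/

open Real

theorem tsum_comm_of_nonneg {α β : Type*} {f : α → β → ℝ} (hf : ∀ a b, 0 ≤ f a b)
    (hrow : ∀ a, Summable (f a)) (hsum : Summable fun a ↦ ∑' b, f a b) :
    ∑' b, ∑' a, f a b = ∑' a, ∑' b, f a b :=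
  Summable.tsum_comm ((summable_prod_of_nonneg fun q ↦ hf q.1 q.2).2 ⟨hrow, hsum⟩)

noncomputable def logDoubleSeries (p x : ℝ) (j k : ℕ) : ℝ :=
  p ^ k * ((x / p ^ (2 * k)) ^ (j + 1) / (j + 1))

lemma logDoubleSeries_nonneg {p x : ℝ} (hp : 0 < p) (hx : 0 ≤ x) (j k : ℕ) :
    0 ≤ logDoubleSeries p x j k := by
  unfold logDoubleSeries; positivity

lemma hasSum_logDoubleSeries_neg_log {p x : ℝ} (hp : 1 ≤ p) (hx : |x| < 1) (k : ℕ) :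
    HasSum (fun j ↦ logDoubleSeries p x j k) (-(p ^ k * log (1 - x / p ^ (2 * k)))) := by
  have hpk : 1 ≤ p ^ (2 * k) := one_le_pow₀ hp
  have hxk : |x / p ^ (2 * k)| < 1 := by
    rw [abs_div, abs_of_pos (a := p ^ (2 * k)) (by linarith)]
    exact (div_le_self (abs_nonneg x) hpk).trans_lt hx
  simpa only [logDoubleSeries, mul_neg] using
    (hasSum_pow_div_log_of_abs_lt_one hxk).mul_left (p ^ k)

lemma logDoubleSeries_eq_mul_geometric {p : ℝ} (hp : p ≠ 0) (x : ℝ) (j k : ℕ) :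
    logDoubleSeries p x j k = x ^ (j + 1) / (j + 1) * ((p ^ (2 * j + 1))⁻¹) ^ k := by
  rw [logDoubleSeries, inv_pow, ← pow_mul, div_pow, ← pow_mul,
    show 2 * k * (j + 1) = k + (2 * j + 1) * k by ring, pow_add]
  field_simp
  ring

lemma hasSum_logDoubleSeries_geometric {p : ℝ} (hp : 1 < p) (x : ℝ) (j : ℕ) :
    HasSum (fun k ↦ logDoubleSeries p x j k)
      (p ^ (2 * j + 1) / (p ^ (2 * j + 1) - 1) * x ^ (j + 1) / (j + 1)) := by
  have hq : 1 < p ^ (2 * j + 1) := one_lt_pow₀ hp (by omega)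
  have hsum : p ^ (2 * j + 1) / (p ^ (2 * j + 1) - 1) * x ^ (j + 1) / (j + 1) =
      x ^ (j + 1) / (j + 1) * (1 - (p ^ (2 * j + 1))⁻¹)⁻¹ := by
    have : p ^ (2 * j + 1) - 1 ≠ 0 := by linarith
    field_simp
  rw [funext (logDoubleSeries_eq_mul_geometric (by positivity) x j), hsum]
  exact (hasSum_geometric_of_lt_one (by positivity) (inv_lt_one_of_one_lt₀ hq)).mul_left _

lemma pow_div_pow_sub_one_le {p : ℝ} (hp : 1 < p) {n : ℕ} (hn : n ≠ 0) :
    p ^ n / (p ^ n - 1) ≤ p / (p - 1) := by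
  have hle : p ≤ p ^ n := le_self_pow₀ hp.le hn
  rw [div_le_div_iff₀ (by linarith) (by linarith)]
  nlinarith

lemma pow_div_pow_sub_one_mul_le {p x : ℝ} (hp : 1 < p) (hx : 0 ≤ x) (j : ℕ) :
    p ^ (2 * j + 1) / (p ^ (2 * j + 1) - 1) * x ^ (j + 1) / (j + 1) ≤
      p / (p - 1) * (x ^ (j + 1) / (j + 1)) := by
  rw [mul_div_assoc]
  exact mul_le_mul_of_nonneg_right (pow_div_pow_sub_one_le hp (by omega)) (by positivity)

lemma hasSum_const_mul_pow_div_log {x : ℝ} (c : ℝ) (hx : |x| < 1) :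
    HasSum (fun j : ℕ ↦ c * (x ^ (j + 1) / (j + 1))) (-c * log (1 - x)) := by
  rw [neg_mul_comm]
  exact (hasSum_pow_div_log_of_abs_lt_one hx).mul_left _

lemma summable_pow_div_pow_sub_one_mul {p x : ℝ} (hp : 1 < p) (hx0 : 0 ≤ x) (hx1 : x < 1) :
    Summable fun j : ℕ ↦ p ^ (2 * j + 1) / (p ^ (2 * j + 1) - 1) * x ^ (j + 1) / (j + 1) :=
  (hasSum_const_mul_pow_div_log (p / (p - 1))
    (abs_lt.2 ⟨by linarith, hx1⟩)).summable.of_nonneg_of_le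
    (fun j ↦ (hasSum_logDoubleSeries_geometric hp x j).nonneg
      (logDoubleSeries_nonneg (by linarith) hx0 j))
    (pow_div_pow_sub_one_mul_le hp hx0)

theorem tsum_neg_pow_mul_log_eq {p x : ℝ} (hp : 1 < p) (hx0 : 0 ≤ x) (hx1 : x < 1) :
    ∑' k : ℕ, -(p ^ k * log (1 - x / p ^ (2 * k))) =
      ∑' j : ℕ, p ^ (2 * j + 1) / (p ^ (2 * j + 1) - 1) * x ^ (j + 1) / (j + 1) := by
  have hx : |x| < 1 := abs_lt.2 ⟨by linarith, hx1⟩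
  have hcols := hasSum_logDoubleSeries_geometric hp x
  calc ∑' k : ℕ, -(p ^ k * log (1 - x / p ^ (2 * k)))
      = ∑' (k) (j), logDoubleSeries p x j k :=
        tsum_congr fun k ↦ (hasSum_logDoubleSeries_neg_log hp.le hx k).tsum_eq.symm
    _ = ∑' (j) (k), logDoubleSeries p x j k := by
        refine tsum_comm_of_nonneg (logDoubleSeries_nonneg (by linarith) hx0)
          (fun j ↦ (hcols j).summable) ?_
        simpa only [(hcols _).tsum_eq] using summable_pow_div_pow_sub_one_mul hp hx0 hx1
    _ = _ := tsum_congr fun j ↦ (hcols j).tsum_eq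

theorem tsum_neg_pow_mul_log_le {p x : ℝ} (hp : 1 < p) (hx0 : 0 ≤ x) (hx1 : x < 1) :
    ∑' k : ℕ, -(p ^ k * log (1 - x / p ^ (2 * k))) ≤ -(p / (p - 1)) * log (1 - x) := by
  have hbound := hasSum_const_mul_pow_div_log (p / (p - 1)) (abs_lt.2 ⟨by linarith, hx1⟩)
  rw [tsum_neg_pow_mul_log_eq hp hx0 hx1, ← hbound.tsum_eq]
  exact (summable_pow_div_pow_sub_one_mul hp hx0 hx1).tsum_le_tsum
    (pow_div_pow_sub_one_mul_le hp hx0) hbound.summable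

theorem log_series_identity_and_bound_general (p t : ℝ) (hp1 : 1 < p)
    (ht0 : 0 < t) (ht1 : t < 1) :
    (∑' k : ℕ, -(p ^ k * Real.log (1 - t ^ 2 / p ^ (2 * k))) =
      ∑' k : ℕ, (p ^ (2 * k + 1) / (p ^ (2 * k + 1) - 1)) *
        t ^ (2 * (k + 1)) / (k + 1)) ∧
    (∑' k : ℕ, -(p ^ k * Real.log (1 - t ^ 2 / p ^ (2 * k)))) ≤
      -(p / (p - 1)) * Real.log (1 - t ^ 2) := by
  have ht2 : t ^ 2 < 1 := by nlinarith
  simp_rw [pow_mul t 2]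
  exact ⟨tsum_neg_pow_mul_log_eq hp1 (sq_nonneg t) ht2,
    tsum_neg_pow_mul_log_le hp1 (sq_nonneg t) ht2⟩

theorem log_series_identity_and_bound (p t : ℝ) (hp1 : 1 < p) (hp2 : p ≤ 2)
    (ht0 : 0 < t) (ht1 : t < 1) :
    (∑' k : ℕ, -(p ^ k * Real.log (1 - t ^ 2 / p ^ (2 * k))) =
      ∑' k : ℕ, (p ^ (2 * k + 1) / (p ^ (2 * k + 1) - 1)) *
        t ^ (2 * (k + 1)) / (k + 1)) ∧
    (∑' k : ℕ, -(p ^ k * Real.log (1 - t ^ 2 / p ^ (2 * k)))) ≤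
      -(p / (p - 1)) * Real.log (1 - t ^ 2) :=
  log_series_identity_and_bound_general p t hp1 ht0 ht1
end

section
/- Let A be a symmetric positive semidefinite d×d real matrix, f(x) = ⟨Ax, x⟩, and V(x) = exp(c f(x)) with c = 1/(4‖A‖_op), where ‖A‖_op is the operator norm. For the Ornstein-Uhlenbeck operator L f = Δf - ⟨x, ∇f⟩ on ℝ^d, one has ‖∇f(x)‖² ≤ -a · (LV(x)/V(x)) + b for all x ∈ ℝ^d, with a = 16‖A‖_op² and b = 8 · trace(A) · ‖A‖_op. -/
/-! Write `T` for the operator of `A` and `c = 1 / (4‖T‖)`. Then `∇f x = 2 T x`, and differentiating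
`V = exp (c f)` twice gives `LV / V = 2c tr A + 4c² ‖T x‖² - 2c ⟪T x, x⟫`. After substituting `c`,
the claim becomes `‖T x‖² ≤ ‖T‖ ⟪T x, x⟫`, which holds for every positive operator `T`. -/

/-- The Laplacian on `ℝ^d`, as the sum of second partial derivatives. -/
noncomputable def laplacian {d : ℕ} (f : EuclideanSpace ℝ (Fin d) → ℝ)
    (x : EuclideanSpace ℝ (Fin d)) : ℝ :=
  ∑ i : Fin d,
    fderiv ℝ (fun y => fderiv ℝ f y (EuclideanSpace.single i 1)) x
      (EuclideanSpace.single i 1)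

/-- The Ornstein-Uhlenbeck generator `L f = Δf - ⟨x, ∇f⟩` on `ℝ^d`. -/
noncomputable def ouGen {d : ℕ} (f : EuclideanSpace ℝ (Fin d) → ℝ)
    (x : EuclideanSpace ℝ (Fin d)) : ℝ :=
  laplacian f x - inner ℝ x (gradient f x)

/-- The operator norm of a matrix acting on Euclidean space. -/
noncomputable def matOpNorm {d : ℕ} (A : Matrix (Fin d) (Fin d) ℝ) : ℝ :=
  ‖LinearMap.toContinuousLinearMap (Matrix.toEuclideanLin A)‖

open scoped RealInnerProductSpace

namespace ContinuousLinearMap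

variable {E : Type*} [NormedAddCommGroup E] [InnerProductSpace ℝ E] {T : E →L[ℝ] E}

theorem IsPositive.norm_sq_apply_le (hT : T.IsPositive) (x : E) :
    ‖T x‖ ^ 2 ≤ ‖T‖ * ⟪T x, x⟫ := by
  rcases (norm_nonneg T).eq_or_lt with hT0 | hTpos
  · simp [norm_eq_zero.mp hT0.symm]
  set t := ‖T‖⁻¹
  have hTt : ‖T‖ * t = 1 := mul_inv_cancel₀ hTpos.ne'
  -- expand `0 ≤ ⟪T y, y⟫` at `y = x - ‖T‖⁻¹ • T x`
  have hpos := hT.inner_nonneg_left (x - t • T x)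
  rw [map_sub, map_smul, inner_sub_left, inner_sub_right, inner_sub_right] at hpos
  simp only [real_inner_smul_left, real_inner_smul_right,
    hT.inner_left_eq_inner_right (T x) x, real_inner_self_eq_norm_sq] at hpos
  have hTTx : t * ⟪T (T x), T x⟫ ≤ ‖T x‖ ^ 2 :=
    calc t * ⟪T (T x), T x⟫ ≤ t * (‖T (T x)‖ * ‖T x‖) := by
          gcongr; exact real_inner_le_norm _ _
      _ ≤ t * (‖T‖ * ‖T x‖ * ‖T x‖) := by gcongr; exact T.le_opNorm _
      _ = ‖T x‖ ^ 2 := by linear_combination ‖T x‖ ^ 2 * hTt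
  nlinarith

theorem hasFDerivAt_inner_apply_self (hT : (T : E →ₗ[ℝ] E).IsSymmetric) (x : E) :
    HasFDerivAt (fun y => ⟪T y, y⟫) (2 • innerSL ℝ (T x)) x := by
  refine (T.hasFDerivAt.inner ℝ (hasFDerivAt_id x)).congr_fderiv ?_
  ext h
  have hsymm : ⟪T h, x⟫ = ⟪h, T x⟫ := hT h x
  simp only [coe_comp, Function.comp_apply, prod_apply, coe_id', id_eq, fderivInnerCLM_apply,
    smul_apply, innerSL_apply_apply, hsymm, real_inner_comm h]
  ring

theorem hasFDerivAt_exp_mul_inner_apply_self (hT : (T : E →ₗ[ℝ] E).IsSymmetric) (c : ℝ)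
    (x : E) :
    HasFDerivAt (fun y => Real.exp (c * ⟪T y, y⟫))
      ((2 * c * Real.exp (c * ⟪T x, x⟫)) • innerSL ℝ (T x)) x := by
  refine ((hasFDerivAt_inner_apply_self hT x).const_mul c).exp.congr_fderiv ?_
  ext h
  simp only [smul_apply, innerSL_apply_apply, smul_eq_mul]
  ring

theorem fderiv_exp_mul_inner_apply_self_apply (hT : (T : E →ₗ[ℝ] E).IsSymmetric) (c : ℝ)
    (x e : E) :
    fderiv ℝ (fun y => Real.exp (c * ⟪T y, y⟫)) x e =
      2 * c * Real.exp (c * ⟪T x, x⟫) * ⟪T x, e⟫ := by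
  simp [(hasFDerivAt_exp_mul_inner_apply_self hT c x).fderiv]

theorem fderiv_fderiv_exp_mul_inner_apply_self_apply (hT : (T : E →ₗ[ℝ] E).IsSymmetric) (c : ℝ)
    (x e : E) :
    fderiv ℝ (fun y => fderiv ℝ (fun z => Real.exp (c * ⟪T z, z⟫)) y e) x e =
      2 * c * Real.exp (c * ⟪T x, x⟫) * (⟪T e, e⟫ + 2 * c * ⟪T x, e⟫ ^ 2) := by
  simp_rw [fderiv_exp_mul_inner_apply_self_apply hT]
  have hderiv : HasFDerivAt (fun y => 2 * c * Real.exp (c * ⟪T y, y⟫) * ⟪T y, e⟫) _ x :=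
    ((hasFDerivAt_exp_mul_inner_apply_self hT c x).const_mul (2 * c)).mul
      (T.hasFDerivAt.inner ℝ (hasFDerivAt_const e x))
  rw [hderiv.fderiv]
  simp only [add_apply, smul_apply, comp_apply, prod_apply, zero_apply, fderivInnerCLM_apply,
    inner_zero_right, zero_add, smul_eq_mul, coe_innerSL_apply]
  ring

theorem gradient_inner_apply_self [CompleteSpace E] (hT : (T : E →ₗ[ℝ] E).IsSymmetric) (x : E) :
    gradient (fun y => ⟪T y, y⟫) x = (2 : ℝ) • T x := by
  refine HasGradientAt.gradient ((hasGradientAt_iff_hasFDerivAt).2 ?_)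
  refine (hasFDerivAt_inner_apply_self hT x).congr_fderiv ?_
  ext h
  simp [InnerProductSpace.toDual_apply_apply]

theorem gradient_exp_mul_inner_apply_self [CompleteSpace E] (hT : (T : E →ₗ[ℝ] E).IsSymmetric)
    (c : ℝ) (x : E) :
    gradient (fun y => Real.exp (c * ⟪T y, y⟫)) x =
      (2 * c * Real.exp (c * ⟪T x, x⟫)) • T x := by
  refine HasGradientAt.gradient ((hasGradientAt_iff_hasFDerivAt).2 ?_)
  refine (hasFDerivAt_exp_mul_inner_apply_self hT c x).congr_fderiv ?_
  ext h
  simp [InnerProductSpace.toDual_apply_apply]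

end ContinuousLinearMap

theorem EuclideanSpace.sum_inner_single_sq {n : Type*} [Fintype n] [DecidableEq n]
    (v : EuclideanSpace ℝ n) : ∑ i, ⟪v, single i 1⟫ ^ 2 = ‖v‖ ^ 2 := by
  simpa [basisFun_apply] using (basisFun n ℝ).sum_sq_inner_left v

namespace Matrix

variable {n : Type*} [Fintype n] [DecidableEq n]

theorem isSymmetric_toEuclideanCLM {A : Matrix n n ℝ} (hA : A.IsHermitian) :
    (toEuclideanCLM (𝕜 := ℝ) A : EuclideanSpace ℝ n →ₗ[ℝ] _).IsSymmetric :=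
  isSymmetric_toEuclideanLin_iff.mpr hA

theorem isPositive_toEuclideanCLM {A : Matrix n n ℝ} (hA : A.PosSemidef) :
    (toEuclideanCLM (𝕜 := ℝ) A).IsPositive :=
  isPositive_toEuclideanLin_iff.mpr hA

theorem sum_inner_toEuclideanCLM_single (A : Matrix n n ℝ) :
    ∑ i, ⟪toEuclideanCLM (𝕜 := ℝ) A (EuclideanSpace.single i 1), EuclideanSpace.single i 1⟫ =
      A.trace := by
  simp [EuclideanSpace.inner_single_right, trace, mulVec_single]

variable {d : ℕ} {A : Matrix (Fin d) (Fin d) ℝ}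

theorem laplacian_exp_mul_inner_toEuclideanCLM_self (hA : A.IsHermitian) (c : ℝ)
    (x : EuclideanSpace ℝ (Fin d)) :
    laplacian (fun y => Real.exp (c * ⟪toEuclideanCLM (𝕜 := ℝ) A y, y⟫)) x =
      2 * c * Real.exp (c * ⟪toEuclideanCLM (𝕜 := ℝ) A x, x⟫) *
        (A.trace + 2 * c * ‖toEuclideanCLM (𝕜 := ℝ) A x‖ ^ 2) := by
  simp only [laplacian, ContinuousLinearMap.fderiv_fderiv_exp_mul_inner_apply_self_apply
      (isSymmetric_toEuclideanCLM hA), ← Finset.mul_sum, Finset.sum_add_distrib,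
    sum_inner_toEuclideanCLM_single, EuclideanSpace.sum_inner_single_sq]

theorem ouGen_exp_mul_inner_toEuclideanCLM_self (hA : A.IsHermitian) (c : ℝ)
    (x : EuclideanSpace ℝ (Fin d)) :
    ouGen (fun y => Real.exp (c * ⟪toEuclideanCLM (𝕜 := ℝ) A y, y⟫)) x =
      Real.exp (c * ⟪toEuclideanCLM (𝕜 := ℝ) A x, x⟫) *
        (2 * c * A.trace + 4 * c ^ 2 * ‖toEuclideanCLM (𝕜 := ℝ) A x‖ ^ 2 -
          2 * c * ⟪toEuclideanCLM (𝕜 := ℝ) A x, x⟫) := by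
  rw [ouGen, laplacian_exp_mul_inner_toEuclideanCLM_self hA,
    ContinuousLinearMap.gradient_exp_mul_inner_apply_self (isSymmetric_toEuclideanCLM hA),
    real_inner_smul_right, real_inner_comm x]
  ring

end Matrix

theorem quadratic_form_lyapunov_general (d : ℕ)
    (A : Matrix (Fin d) (Fin d) ℝ) (hpsd : A.PosSemidef)
    (hop : 0 < matOpNorm A)
    (f V : EuclideanSpace ℝ (Fin d) → ℝ)
    (hf : ∀ x, f x = inner ℝ (Matrix.toEuclideanLin A x) x)
    (hV : ∀ x, V x = Real.exp ((1 / (4 * matOpNorm A)) * f x)) :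
    ∀ x : EuclideanSpace ℝ (Fin d),
      ‖gradient f x‖ ^ 2 ≤
        -(16 * matOpNorm A ^ 2) * (ouGen V x / V x) +
          8 * A.trace * matOpNorm A := by
  intro x
  obtain rfl : f = fun y => ⟪Matrix.toEuclideanCLM (𝕜 := ℝ) A y, y⟫ := funext hf
  obtain rfl : V = fun y =>
      Real.exp (1 / (4 * matOpNorm A) * ⟪Matrix.toEuclideanCLM (𝕜 := ℝ) A y, y⟫) := funext hV
  rw [ContinuousLinearMap.gradient_inner_apply_self (Matrix.isSymmetric_toEuclideanCLM hpsd.isHermitian),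
    Matrix.ouGen_exp_mul_inner_toEuclideanCLM_self hpsd.isHermitian,
    mul_div_cancel_left₀ _ (Real.exp_pos _).ne']
  set T := Matrix.toEuclideanCLM (𝕜 := ℝ) A
  set M := matOpNorm A
  have hTx : ‖T x‖ ^ 2 ≤ M * ⟪T x, x⟫ :=
    (Matrix.isPositive_toEuclideanCLM hpsd).norm_sq_apply_le x
  calc ‖(2 : ℝ) • T x‖ ^ 2 = 4 * ‖T x‖ ^ 2 := by rw [norm_smul]; norm_num; ring
    _ ≤ 8 * M * ⟪T x, x⟫ - 4 * ‖T x‖ ^ 2 := by linarith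
    _ = _ := by field_simp; ring

theorem quadratic_form_lyapunov (d : ℕ) (hd : 1 ≤ d)
    (A : Matrix (Fin d) (Fin d) ℝ) (hsymm : A.IsSymm) (hpsd : A.PosSemidef)
    (hop : 0 < matOpNorm A)
    (f V : EuclideanSpace ℝ (Fin d) → ℝ)
    (hf : ∀ x, f x = inner ℝ (Matrix.toEuclideanLin A x) x)
    (hV : ∀ x, V x = Real.exp ((1 / (4 * matOpNorm A)) * f x)) :
    ∀ x : EuclideanSpace ℝ (Fin d),
      ‖gradient f x‖ ^ 2 ≤
        -(16 * matOpNorm A ^ 2) * (ouGen V x / V x) +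
          8 * A.trace * matOpNorm A :=
  quadratic_form_lyapunov_general d A hpsd hop f V hf hV
end

section
/- Let μ be a probability measure on ℕ with density proportional to e^{-U} with respect to counting measure, where U : ℕ → ℝ. If μ is ultra log-concave, i.e., the discrete Laplacian ΔU(x) := U(x+1) - 2U(x) + U(x-1) satisfies ΔU(x) ≥ log(1 + 1/x) for all x ≥ 1, then the birth-death rates λ_x = 1 and ν_x = e^{U(x)-U(x-1)}·1_{x≠0} satisfy λ_x - λ_{x+1} + ν_{x+1} - ν_x ≥ ν_1 = e^{U(1)-U(0)} for all integers x ≥ 2. -/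
/-!
Write `a x = ν x = exp (U x - U (x - 1))` for `x ≥ 1`. Exponentiating the hypothesis on the
discrete Laplacian gives `a (x + 1) ≥ (1 + 1 / x) a x`, i.e. `a (x + 1) - a x ≥ a x / x`.
Telescoping the factors `1 + 1 / k = (k + 1) / k` gives `a x ≥ x a 1`, hence
`a (x + 1) - a x ≥ a x / x ≥ a 1`.
-/

open Real

theorem exp_div_le_exp_sub_exp {p q r : ℝ} (hr : 0 < r) (h : log (1 + 1 / r) ≤ q - p) :
    exp p / r ≤ exp q - exp p := by
  have hratio : 1 + 1 / r ≤ exp (q - p) := (log_le_iff_le_exp (by positivity)).1 h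
  have hq : exp q = exp (q - p) * exp p := by rw [← exp_add, sub_add_cancel]
  calc exp p / r = (1 + 1 / r) * exp p - exp p := by ring
    _ ≤ exp (q - p) * exp p - exp p := by gcongr
    _ = exp q - exp p := by rw [hq]

theorem natCast_mul_le_of_div_le_sub {a : ℕ → ℝ}
    (h : ∀ n : ℕ, 1 ≤ n → a n / n ≤ a (n + 1) - a n) :
    ∀ n : ℕ, 1 ≤ n → n * a 1 ≤ a n := by
  intro n hn
  induction n, hn using Nat.le_induction with
  | base => simp
  | succ n hn ih =>
    have hpos : (0 : ℝ) < n := by exact_mod_cast hn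
    have hdiv : a 1 ≤ a n / n := (le_div_iff₀ hpos).2 (by linarith)
    push_cast
    linarith [h n hn]

theorem ultra_log_concave_rate_bound_general (U : ℕ → ℝ)
    (hU : ∀ x : ℕ, 1 ≤ x →
      U (x + 1) - 2 * U x + U (x - 1) ≥ Real.log (1 + 1 / (x : ℝ)))
    (lam ν : ℕ → ℝ) (hlam : ∀ x, lam x = 1)
    (hν : ∀ x : ℕ, 1 ≤ x → ν x = Real.exp (U x - U (x - 1))) :
    ∀ x : ℕ, 2 ≤ x →
      lam x - lam (x + 1) + ν (x + 1) - ν x ≥ Real.exp (U 1 - U 0) := by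
  intro x hx
  set a : ℕ → ℝ := fun n ↦ exp (U n - U (n - 1)) with ha
  have increment_ge : ∀ n : ℕ, 1 ≤ n → a n / n ≤ a (n + 1) - a n := by
    intro n hn
    have hΔ : log (1 + 1 / (n : ℝ)) ≤ (U (n + 1) - U n) - (U n - U (n - 1)) := by
      linarith [hU n hn]
    simpa [ha] using exp_div_le_exp_sub_exp (by positivity) hΔ
  have growth := natCast_mul_le_of_div_le_sub increment_ge x (by omega)
  have hxpos : (0 : ℝ) < x := by positivity
  rw [hlam, hlam, hν x (by omega), hν (x + 1) (by omega)]
  calc exp (U 1 - U 0) = a 1 := rfl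
    _ ≤ a x / x := (le_div_iff₀ hxpos).2 (by linarith)
    _ ≤ a (x + 1) - a x := increment_ge x (by omega)
    _ = 1 - 1 + exp (U (x + 1) - U (x + 1 - 1)) - exp (U x - U (x - 1)) := by simp [ha]

theorem ultra_log_concave_rate_bound (U : ℕ → ℝ)
    (hU : ∀ x : ℕ, 1 ≤ x →
      U (x + 1) - 2 * U x + U (x - 1) ≥ Real.log (1 + 1 / (x : ℝ)))
    (lam ν : ℕ → ℝ) (hlam : ∀ x, lam x = 1) (hν0 : ν 0 = 0)
    (hν : ∀ x : ℕ, 1 ≤ x → ν x = Real.exp (U x - U (x - 1))) :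
    ∀ x : ℕ, 2 ≤ x →
      lam x - lam (x + 1) + ν (x + 1) - ν x ≥ Real.exp (U 1 - U 0) :=
  ultra_log_concave_rate_bound_general U hU lam ν hlam hν
end
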